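/- Let 𝒞_f ⊂ (0,1) be finite and f : [0,1]∖𝒞_f → [0,1] a C³ local diffeomorphism with negative Schwarzian derivative. Let x ∈ [0,1] be a point whose forward orbit never hits 𝒞_f and which is not contained in the basin of attraction of any attracting periodic-like orbit, and let p be a periodic-like point. (1) If p is left-periodic, then p ∈ closure(O_f⁺(x) ∩ [0,p)) if and only if p ∈ closure(ω_f(x) ∩ [0,p)). (2) If p is right-periodic, then p ∈ closure(O_f⁺(x) ∩ (p,1]) if and only if p ∈ closure(ω_f(x) ∩ (p,1]). -/

import Mathlib

open Set Filter MeasureTheory Topology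

/-- The ω-limit set of `x` under iteration of `f`: the set of accumulation points of
the sequence `n ↦ f^[n] x`. -/
def omegaSet (f : ℝ → ℝ) (x : ℝ) : Set ℝ :=
  {y | MapClusterPt y (Filter.atTop : Filter ℕ) fun n => f^[n] x}

/-- The forward orbit of `x` under `f`. -/
def forwardOrbit (f : ℝ → ℝ) (x : ℝ) : Set ℝ :=
  Set.range fun n => f^[n] x

/-- The Schwarzian derivative of `f`, computed with derivatives within `s`. -/
noncomputable def schwarzianWithin (f : ℝ → ℝ) (s : Set ℝ) (x : ℝ) : ℝ :=
  derivWithin (derivWithin (derivWithin f s) s) s x / derivWithin f s x -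
    (3 / 2) * (derivWithin (derivWithin f s) s x / derivWithin f s x) ^ 2

/-- The left lateral iterate `fⁿ(p−) = lim_{x↑p} fⁿ(x)`. -/
noncomputable def leftIter (f : ℝ → ℝ) (n : ℕ) (p : ℝ) : ℝ :=
  limUnder (nhdsWithin p (Set.Iio p)) f^[n]

/-- The right lateral iterate `fⁿ(p+) = lim_{x↓p} fⁿ(x)`. -/
noncomputable def rightIter (f : ℝ → ℝ) (n : ℕ) (p : ℝ) : ℝ :=
  limUnder (nhdsWithin p (Set.Ioi p)) f^[n]

/-- `fˡ(p−) = p` and `fˡ` maps a small left neighbourhood `(p−ε, p)` to the left of `p`. -/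
def LeftPeriodicAux (f : ℝ → ℝ) (p : ℝ) (l : ℕ) : Prop :=
  1 ≤ l ∧ Filter.Tendsto f^[l] (nhdsWithin p (Set.Iio p)) (nhds p) ∧
    ∃ ε > 0, ∀ x ∈ Set.Ioo (p - ε) p, f^[l] x ∈ Set.Iio p

def RightPeriodicAux (f : ℝ → ℝ) (p : ℝ) (l : ℕ) : Prop :=
  1 ≤ l ∧ Filter.Tendsto f^[l] (nhdsWithin p (Set.Ioi p)) (nhds p) ∧
    ∃ ε > 0, ∀ x ∈ Set.Ioo p (p + ε), f^[l] x ∈ Set.Ioi p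

/-- `p` is left-periodic with (least) period `n`. -/
def IsLeftPeriodic (f : ℝ → ℝ) (p : ℝ) (n : ℕ) : Prop :=
  LeftPeriodicAux f p n ∧ ∀ m, m < n → ¬ LeftPeriodicAux f p m

/-- `p` is right-periodic with (least) period `n`. -/
def IsRightPeriodic (f : ℝ → ℝ) (p : ℝ) (n : ℕ) : Prop :=
  RightPeriodicAux f p n ∧ ∀ m, m < n → ¬ RightPeriodicAux f p m

/-- `p` is periodic-like if it is left- or right-periodic. -/
def IsPeriodicLike (f : ℝ → ℝ) (p : ℝ) : Prop :=
  (∃ n, IsLeftPeriodic f p n) ∨ (∃ n, IsRightPeriodic f p n)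

/-- The finite left lateral orbit `{fʲ(p−) : 0 ≤ j < n}`. -/
def leftLateralOrbit (f : ℝ → ℝ) (p : ℝ) (n : ℕ) : Set ℝ :=
  {y | ∃ j < n, leftIter f j p = y}

/-- The finite right lateral orbit `{fʲ(p+) : 0 ≤ j < n}`. -/
def rightLateralOrbit (f : ℝ → ℝ) (p : ℝ) (n : ℕ) : Set ℝ :=
  {y | ∃ j < n, rightIter f j p = y}

/-- `A` is an attracting periodic-like orbit of `f`: the finite lateral orbit of a
left- (resp. right-) periodic point `p` of period `n` which equals `ω_f(x)` for every `x`
in a one-sided neighbourhood of `p`. -/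
def IsAttractingPeriodicLikeOrbit (f : ℝ → ℝ) (A : Set ℝ) : Prop :=
  (∃ p n, IsLeftPeriodic f p n ∧ A = leftLateralOrbit f p n ∧
      ∃ ε > 0, ∀ x ∈ Set.Ioo (p - ε) p, omegaSet f x = A) ∨
  (∃ p n, IsRightPeriodic f p n ∧ A = rightLateralOrbit f p n ∧
      ∃ ε > 0, ∀ x ∈ Set.Ioo p (p + ε), omegaSet f x = A)

/-- The basin of attraction `β_f(A) = {x : ω_f(x) ⊆ A}`. -/
def basin (f : ℝ → ℝ) (A : Set ℝ) : Set ℝ := {x | omegaSet f x ⊆ A}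

/-- `B₀(f)`: the union of the basins of all attracting periodic-like orbits of `f`. -/
def B0 (f : ℝ → ℝ) : Set ℝ :=
  {x | ∃ A, IsAttractingPeriodicLikeOrbit f A ∧ omegaSet f x ⊆ A}

/-- `B₁(f) = {x : Interior (ω_f(x)) ≠ ∅}`. -/
def B1 (f : ℝ → ℝ) : Set ℝ := {x | (interior (omegaSet f x)).Nonempty}

section Helpers

-- cluster point transfer along a subsequence tending to atTop
lemma mapClusterPt_of_comp' {u : ℕ → ℝ} {φ : ℕ → ℕ} {y : ℝ}
    (hφ : Tendsto φ atTop atTop) (h : MapClusterPt y atTop (fun k => u (φ k))) :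
    MapClusterPt y atTop u :=
  MapClusterPt.of_comp (u := u) (φ := φ) hφ h

lemma omegaSet_iterate (f : ℝ → ℝ) (x : ℝ) (m : ℕ) :
    omegaSet f (f^[m] x) = omegaSet f x := by
  have key : ∀ y, MapClusterPt y atTop (fun k => f^[k] (f^[m] x)) ↔
      MapClusterPt y atTop (fun k => f^[k] x) := by
    intro y
    constructor
    · intro h
      have : (fun k => f^[k] (f^[m] x)) = fun k => f^[k + m] x := by
        funext k; rw [← Function.iterate_add_apply]
      rw [this] at h
      exact mapClusterPt_of_comp' (u := fun k => f^[k] x) (φ := fun k => k + m)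
        (tendsto_add_atTop_nat m) h
    · intro h
      rw [mapClusterPt_iff_frequently] at h ⊢
      intro s hs
      refine frequently_atTop.2 fun N => ?_
      obtain ⟨k, hk, hks⟩ := frequently_atTop.1 (h s hs) (N + m)
      refine ⟨k - m, by omega, ?_⟩
      rw [← Function.iterate_add_apply]
      have : k - m + m = k := by omega
      rw [this]
      exact hks
  ext y; exact key y

lemma orbit_mem_Icc {f : ℝ → ℝ} {C : Finset ℝ}
    (hmaps : Set.MapsTo f (Set.Icc 0 1 \ (C : Set ℝ)) (Set.Icc 0 1))
    {x : ℝ} (hx : x ∈ Set.Icc (0:ℝ) 1) (horb : ∀ n : ℕ, f^[n] x ∉ (C : Set ℝ)) :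
    ∀ n, f^[n] x ∈ Set.Icc (0:ℝ) 1 := by
  intro n
  induction n with
  | zero => simpa using hx
  | succ k ih =>
    rw [Function.iterate_succ_apply']
    exact hmaps ⟨ih, horb k⟩

lemma omegaSet_subset_Icc {f : ℝ → ℝ} {x : ℝ}
    (h : ∀ n, f^[n] x ∈ Set.Icc (0:ℝ) 1) : omegaSet f x ⊆ Set.Icc 0 1 := by
  intro y hy
  by_contra hc
  have : (Set.Icc (0:ℝ) 1)ᶜ ∈ 𝓝 y := isClosed_Icc.isOpen_compl.mem_nhds hc
  obtain ⟨n, hn⟩ := ((mapClusterPt_iff_frequently.1 hy) _ this).exists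
  exact hn (h n)

-- frequently close to p from the left
lemma frequently_orbit_near_left {f : ℝ → ℝ} {x p : ℝ}
    (horbacc : p ∈ closure (forwardOrbit f x ∩ Set.Ico 0 p)) :
    ∀ η > 0, ∀ N : ℕ, ∃ m ≥ N, f^[m] x ∈ Set.Ioo (p - η) p := by
  intro η hη N
  classical
  set ds : Finset ℝ := ((Finset.range N).image fun m => p - f^[m] x).filter (fun t => 0 < t)
    with hds
  set η' : ℝ := if h : ds.Nonempty then min η (ds.min' h) else η with hη'
  have hη'pos : 0 < η' := by
    rw [hη']
    split
    · rename_i h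
      refine lt_min hη ?_
      have hmm := ds.min'_mem h
      simp only [hds, Finset.mem_filter] at hmm
      exact hmm.2
    · exact hη
  have hη'le : η' ≤ η := by
    rw [hη']; split
    · exact min_le_left _ _
    · exact le_refl _
  obtain ⟨b, hb, hbd⟩ := Metric.mem_closure_iff.1 horbacc η' hη'pos
  obtain ⟨⟨m, hm'⟩, hbi⟩ := hb
  have hm : f^[m] x = b := hm'
  have hblt : p - η' < b := by
    have : |p - b| < η' := by simpa [Real.dist_eq] using hbd
    have := abs_lt.1 this
    linarith [this.2]
  have hbIoo : b ∈ Set.Ioo (p - η) p := ⟨lt_of_le_of_lt (by linarith) hblt, hbi.2⟩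
  refine ⟨m, ?_, by rw [hm]; exact hbIoo⟩
  by_contra hmN
  push_neg at hmN
  have hmem : p - b ∈ ds := by
    rw [hds]
    refine Finset.mem_filter.2 ⟨Finset.mem_image.2 ⟨m, Finset.mem_range.2 hmN, by rw [hm]⟩, ?_⟩
    simpa using hbi.2
  have hne : ds.Nonempty := ⟨_, hmem⟩
  have : η' ≤ p - b := by
    rw [hη', dif_pos hne]
    exact le_trans (min_le_right _ _) (ds.min'_le _ hmem)
  linarith

lemma inter_Ico_eq_inter_Iio {A : Set ℝ} (hA : A ⊆ Set.Icc 0 1) (p : ℝ) :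
    A ∩ Set.Ico 0 p = A ∩ Set.Iio p := by
  ext y
  constructor
  · rintro ⟨hy, _, h2⟩; exact ⟨hy, h2⟩
  · rintro ⟨hy, h2⟩; exact ⟨hy, (hA hy).1, h2⟩

lemma inter_Ioc_eq_inter_Ioi {A : Set ℝ} (hA : A ⊆ Set.Icc 0 1) (p : ℝ) :
    A ∩ Set.Ioc p 1 = A ∩ Set.Ioi p := by
  ext y
  constructor
  · rintro ⟨hy, h2, _⟩; exact ⟨hy, h2⟩
  · rintro ⟨hy, h2⟩; exact ⟨hy, h2, (hA hy).2⟩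

lemma omega_inter_subset_closure_orbit {f : ℝ → ℝ} {x : ℝ} {U : Set ℝ} (hU : IsOpen U) :
    omegaSet f x ∩ U ⊆ closure (forwardOrbit f x ∩ U) := by
  rintro y ⟨hy, hyU⟩
  rw [mem_closure_iff]
  intro V hV hyV
  obtain ⟨n, hn⟩ := (mapClusterPt_iff_frequently.1 hy (V ∩ U) ((hV.inter hU).mem_nhds ⟨hyV, hyU⟩)).exists
  exact ⟨f^[n] x, hn.1, ⟨n, rfl⟩, hn.2⟩

-- bounded sequence with unique cluster point converges
lemma tendsto_of_unique_cluster {u : ℕ → ℝ} {a b c : ℝ}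
    (hmem : ∀ n, u n ∈ Set.Icc a b)
    (huniq : ∀ y, MapClusterPt y atTop u → y = c) :
    Tendsto u atTop (𝓝 c) := by
  apply tendsto_of_subseq_tendsto
  intro ns hns
  have hbdd : Bornology.IsBounded (Set.Icc a b) := Metric.isBounded_Icc a b
  obtain ⟨y, _, φ, hφ, hty⟩ := tendsto_subseq_of_bounded hbdd (fun n => hmem (ns n))
  have hy : MapClusterPt y atTop u := by
    refine MapClusterPt.of_comp (φ := fun k => ns (φ k)) (hns.comp hφ.tendsto_atTop) ?_
    exact hty.mapClusterPt
  exact ⟨φ, by rw [huniq y hy] at hty; exact hty⟩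


lemma mapClusterPt_mem_Icc {u : ℕ → ℝ} {a b y : ℝ} (h : ∀ k, u k ∈ Set.Icc a b)
    (hy : MapClusterPt y atTop u) : y ∈ Set.Icc a b := by
  by_contra hc
  have : (Set.Icc a b)ᶜ ∈ 𝓝 y := isClosed_Icc.isOpen_compl.mem_nhds hc
  obtain ⟨k, hk⟩ := (mapClusterPt_iff_frequently.1 hy _ this).exists
  exact Set.notMem_compl_iff.2 (h k) hk

lemma exists_mapClusterPt_of_frequently {u : ℕ → ℝ} {K : Set ℝ} (hK : IsCompact K)
    (h : ∃ᶠ m in atTop, u m ∈ K) : ∃ y ∈ K, MapClusterPt y atTop u := by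
  have hne : (atTop ⊓ 𝓟 {m | u m ∈ K}).NeBot := frequently_iff_neBot.1 h
  have hle : map u (atTop ⊓ 𝓟 {m | u m ∈ K}) ≤ 𝓟 K := by
    calc map u (atTop ⊓ 𝓟 {m | u m ∈ K}) ≤ map u (𝓟 {m | u m ∈ K}) := map_mono inf_le_right
      _ = 𝓟 (u '' {m | u m ∈ K}) := map_principal
      _ ≤ 𝓟 K := principal_mono.2 (by rintro y ⟨m, hm, rfl⟩; exact hm)
  obtain ⟨y, hyK, hy⟩ := hK.exists_clusterPt hle
  exact ⟨y, hyK, hy.mono (map_mono inf_le_left)⟩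

variable {f : ℝ → ℝ} {C : Finset ℝ}

lemma mono_or_anti
    (hreg : ContDiffOn ℝ 3 f (Set.Icc 0 1 \ (C : Set ℝ)))
    (hdiffeo : ∀ x ∈ Set.Icc (0:ℝ) 1 \ (C : Set ℝ),
      derivWithin f (Set.Icc 0 1 \ (C : Set ℝ)) x ≠ 0)
    {u v : ℝ} (huv : u < v) (hsub : Set.Ioo u v ⊆ Set.Icc 0 1 \ (C : Set ℝ)) :
    StrictMonoOn f (Set.Ioo u v) ∨ StrictAntiOn f (Set.Ioo u v) := by
  have hmem : ∀ w ∈ Set.Ioo u v, Set.Icc (0:ℝ) 1 \ (C : Set ℝ) ∈ 𝓝 w := fun w hw =>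
    mem_of_superset (isOpen_Ioo.mem_nhds hw) hsub
  have hne : ∀ w ∈ Set.Ioo u v, deriv f w ≠ 0 := by
    intro w hw
    rw [← derivWithin_of_mem_nhds (hmem w hw)]
    exact hdiffeo w (hsub hw)
  have h3 : ContDiffOn ℝ ((2:WithTop ℕ∞) + 1) f (Set.Ioo u v) := by
    have := hreg.mono hsub
    norm_num at this ⊢
    exact this
  have hcont : ContinuousOn (deriv f) (Set.Ioo u v) :=
    (((contDiffOn_succ_iff_deriv_of_isOpen isOpen_Ioo).1 h3).2.2).continuousOn
  have hcf : ContinuousOn f (Set.Ioo u v) := hreg.continuousOn.mono hsub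
  set w₀ := (u + v) / 2 with hw₀
  have hw₀m : w₀ ∈ Set.Ioo u v := ⟨by simp only [hw₀]; linarith, by simp only [hw₀]; linarith⟩
  rcases lt_or_gt_of_ne (hne w₀ hw₀m) with hneg | hpos
  · right
    apply strictAntiOn_of_deriv_neg (convex_Ioo u v) hcf
    intro w hw
    rw [interior_Ioo] at hw
    by_contra hge
    push_neg at hge
    have h0lt : (0:ℝ) < deriv f w := lt_of_le_of_ne hge (Ne.symm (hne w hw))
    have := IsPreconnected.intermediate_value isPreconnected_Ioo hw₀m hw hcont
    have h0m : (0:ℝ) ∈ Set.Icc (deriv f w₀) (deriv f w) := ⟨le_of_lt hneg, le_of_lt h0lt⟩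
    obtain ⟨w', hw', hw'0⟩ := this h0m
    exact hne w' hw' hw'0
  · left
    apply strictMonoOn_of_deriv_pos (convex_Ioo u v) hcf
    intro w hw
    rw [interior_Ioo] at hw
    by_contra hge
    push_neg at hge
    have h0lt : deriv f w < 0 := lt_of_le_of_ne hge (hne w hw)
    have := IsPreconnected.intermediate_value isPreconnected_Ioo hw hw₀m hcont
    have h0m : (0:ℝ) ∈ Set.Icc (deriv f w) (deriv f w₀) := ⟨le_of_lt h0lt, le_of_lt hpos⟩
    obtain ⟨w', hw', hw'0⟩ := this h0m
    exact hne w' hw' hw'0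

lemma interval_left_in_s {L : ℝ} (hL0 : 0 < L) (hL1 : L ≤ 1) :
    ∃ b > 0, Set.Ioo (L - b) L ⊆ Set.Icc 0 1 \ (C : Set ℝ) := by
  have hev : ∀ᶠ w in 𝓝[<] L, w ∈ Set.Icc (0:ℝ) 1 \ (C : Set ℝ) := by
    have h1 : ∀ᶠ w in 𝓝[<] L, w ∈ Set.Ioo 0 L :=
      eventually_mem_set.2 (Ioo_mem_nhdsLT hL0)
    have h2 : ∀ᶠ w in 𝓝[<] L, w ∉ (C : Set ℝ) := by
      have : ∀ c ∈ C, ∀ᶠ w in 𝓝[<] L, w ≠ c := by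
        intro c _
        rcases lt_or_ge c L with h | h
        · exact (eventually_mem_set.2 (Ioo_mem_nhdsLT h)).mono
            (fun w hw => ne_of_gt hw.1)
        · exact eventually_nhdsWithin_of_forall (fun w hw => ne_of_lt (lt_of_lt_of_le hw h))
      have := (eventually_all_finset C).2 this
      exact this.mono (fun w hw hc => hw _ (by exact_mod_cast hc) rfl)
    filter_upwards [h1, h2] with w hw1 hw2
    exact ⟨⟨le_of_lt hw1.1, le_trans (le_of_lt hw1.2) hL1⟩, hw2⟩
  obtain ⟨l, hl, hsub⟩ := mem_nhdsLT_iff_exists_Ioo_subset.1 hev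
  exact ⟨L - l, by simp only [sub_pos]; exact hl, by rw [show L - (L - l) = l by ring]; exact hsub⟩

lemma interval_right_in_s {L : ℝ} (hL0 : 0 ≤ L) (hL1 : L < 1) :
    ∃ b > 0, Set.Ioo L (L + b) ⊆ Set.Icc 0 1 \ (C : Set ℝ) := by
  have hev : ∀ᶠ w in 𝓝[>] L, w ∈ Set.Icc (0:ℝ) 1 \ (C : Set ℝ) := by
    have h1 : ∀ᶠ w in 𝓝[>] L, w ∈ Set.Ioo L 1 :=
      eventually_mem_set.2 (Ioo_mem_nhdsGT hL1)
    have h2 : ∀ᶠ w in 𝓝[>] L, w ∉ (C : Set ℝ) := by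
      have : ∀ c ∈ C, ∀ᶠ w in 𝓝[>] L, w ≠ c := by
        intro c _
        rcases lt_or_ge L c with h | h
        · exact (eventually_mem_set.2 (Ioo_mem_nhdsGT h)).mono
            (fun w hw => ne_of_lt hw.2)
        · exact eventually_nhdsWithin_of_forall (fun w hw => ne_of_gt (lt_of_le_of_lt h hw))
      have := (eventually_all_finset C).2 this
      exact this.mono (fun w hw hc => hw _ (by exact_mod_cast hc) rfl)
    filter_upwards [h1, h2] with w hw1 hw2
    exact ⟨⟨le_trans hL0 (le_of_lt hw1.1), le_of_lt hw1.2⟩, hw2⟩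
  obtain ⟨r, hr, hsub⟩ := mem_nhdsGT_iff_exists_Ioo_subset.1 hev
  exact ⟨r - L, by simp only [sub_pos]; exact hr, by rw [show L + (r - L) = r by ring]; exact hsub⟩


lemma step_left
    (hmaps : Set.MapsTo f (Set.Icc 0 1 \ (C : Set ℝ)) (Set.Icc 0 1))
    (hmono : StrictMonoOn f (Set.Ioo u v) ∨ StrictAntiOn f (Set.Ioo u v))
    (hsub : Set.Ioo u v ⊆ Set.Icc 0 1 \ (C : Set ℝ)) (huv : u < v) :
    ∃ L', 0 ≤ L' ∧ L' ≤ 1 ∧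
      (Tendsto f (𝓝[<] v) (𝓝[<] L') ∨ Tendsto f (𝓝[<] v) (𝓝[>] L')) := by
  have hne : (Set.Ioo u v).Nonempty := nonempty_Ioo.2 huv
  have himg : f '' Set.Ioo u v ⊆ Set.Icc 0 1 := by
    rintro y ⟨w, hw, rfl⟩; exact hmaps (hsub hw)
  have hevI : ∀ᶠ w in 𝓝[<] v, w ∈ Set.Ioo u v :=
    eventually_mem_set.2 (Ioo_mem_nhdsLT huv)
  rcases hmono with hm | ha
  · set L' := sSup (f '' Set.Ioo u v) with hL'
    have hbdd : BddAbove (f '' Set.Ioo u v) := ⟨1, fun y hy => (himg hy).2⟩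
    have htd : Tendsto f (𝓝[<] v) (𝓝 L') :=
      MonotoneOn.tendsto_nhdsWithin_Ioo_left hne hm.monotoneOn hbdd
    obtain ⟨w₁, hw₁⟩ := hne
    have h0 : 0 ≤ L' := le_trans (himg (mem_image_of_mem f hw₁)).1
      (le_csSup hbdd (mem_image_of_mem f hw₁))
    have h1 : L' ≤ 1 := csSup_le ((nonempty_Ioo.2 huv).image f) (fun y hy => (himg hy).2)
    have hstrict : ∀ w ∈ Set.Ioo u v, f w < L' := by
      intro w hw
      have hw' : (w + v) / 2 ∈ Set.Ioo u v := ⟨lt_trans hw.1 (by linarith [hw.2]), by linarith [hw.2]⟩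
      calc f w < f ((w + v)/2) := hm hw hw' (by linarith [hw.2])
        _ ≤ L' := le_csSup hbdd (mem_image_of_mem f hw')
    refine ⟨L', h0, h1, Or.inl ?_⟩
    rw [tendsto_nhdsWithin_iff]
    exact ⟨htd, hevI.mono (fun w hw => hstrict w hw)⟩
  · set L' := sInf (f '' Set.Ioo u v) with hL'
    have hbdd : BddBelow (f '' Set.Ioo u v) := ⟨0, fun y hy => (himg hy).1⟩
    have htd : Tendsto f (𝓝[<] v) (𝓝 L') :=
      AntitoneOn.tendsto_nhdsWithin_Ioo_left hne ha.antitoneOn hbdd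
    obtain ⟨w₁, hw₁⟩ := hne
    have h0 : 0 ≤ L' := le_csInf ((nonempty_Ioo.2 huv).image f) (fun y hy => (himg hy).1)
    have h1 : L' ≤ 1 := le_trans (csInf_le hbdd (mem_image_of_mem f hw₁))
      (himg (mem_image_of_mem f hw₁)).2
    have hstrict : ∀ w ∈ Set.Ioo u v, L' < f w := by
      intro w hw
      have hw' : (w + v) / 2 ∈ Set.Ioo u v := ⟨lt_trans hw.1 (by linarith [hw.2]), by linarith [hw.2]⟩
      calc L' ≤ f ((w + v)/2) := csInf_le hbdd (mem_image_of_mem f hw')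
        _ < f w := ha hw hw' (by linarith [hw.2])
    refine ⟨L', h0, h1, Or.inr ?_⟩
    rw [tendsto_nhdsWithin_iff]
    exact ⟨htd, hevI.mono (fun w hw => hstrict w hw)⟩

lemma step_right
    (hmaps : Set.MapsTo f (Set.Icc 0 1 \ (C : Set ℝ)) (Set.Icc 0 1))
    (hmono : StrictMonoOn f (Set.Ioo u v) ∨ StrictAntiOn f (Set.Ioo u v))
    (hsub : Set.Ioo u v ⊆ Set.Icc 0 1 \ (C : Set ℝ)) (huv : u < v) :
    ∃ L', 0 ≤ L' ∧ L' ≤ 1 ∧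
      (Tendsto f (𝓝[>] u) (𝓝[<] L') ∨ Tendsto f (𝓝[>] u) (𝓝[>] L')) := by
  have hne : (Set.Ioo u v).Nonempty := nonempty_Ioo.2 huv
  have himg : f '' Set.Ioo u v ⊆ Set.Icc 0 1 := by
    rintro y ⟨w, hw, rfl⟩; exact hmaps (hsub hw)
  have hevI : ∀ᶠ w in 𝓝[>] u, w ∈ Set.Ioo u v :=
    eventually_mem_set.2 (Ioo_mem_nhdsGT huv)
  rcases hmono with hm | ha
  · set L' := sInf (f '' Set.Ioo u v) with hL'
    have hbdd : BddBelow (f '' Set.Ioo u v) := ⟨0, fun y hy => (himg hy).1⟩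
    have htd : Tendsto f (𝓝[>] u) (𝓝 L') :=
      MonotoneOn.tendsto_nhdsWithin_Ioo_right hne hm.monotoneOn hbdd
    obtain ⟨w₁, hw₁⟩ := hne
    have h0 : 0 ≤ L' := le_csInf ((nonempty_Ioo.2 huv).image f) (fun y hy => (himg hy).1)
    have h1 : L' ≤ 1 := le_trans (csInf_le hbdd (mem_image_of_mem f hw₁))
      (himg (mem_image_of_mem f hw₁)).2
    have hstrict : ∀ w ∈ Set.Ioo u v, L' < f w := by
      intro w hw
      have hw' : (u + w) / 2 ∈ Set.Ioo u v := ⟨by linarith [hw.1], lt_trans (by linarith [hw.1]) hw.2⟩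
      calc L' ≤ f ((u + w)/2) := csInf_le hbdd (mem_image_of_mem f hw')
        _ < f w := hm hw' hw (by linarith [hw.1])
    refine ⟨L', h0, h1, Or.inr ?_⟩
    rw [tendsto_nhdsWithin_iff]
    exact ⟨htd, hevI.mono (fun w hw => hstrict w hw)⟩
  · set L' := sSup (f '' Set.Ioo u v) with hL'
    have hbdd : BddAbove (f '' Set.Ioo u v) := ⟨1, fun y hy => (himg hy).2⟩
    have htd : Tendsto f (𝓝[>] u) (𝓝 L') :=
      AntitoneOn.tendsto_nhdsWithin_Ioo_right hne ha.antitoneOn hbdd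
    obtain ⟨w₁, hw₁⟩ := hne
    have h0 : 0 ≤ L' := le_trans (himg (mem_image_of_mem f hw₁)).1
      (le_csSup hbdd (mem_image_of_mem f hw₁))
    have h1 : L' ≤ 1 := csSup_le ((nonempty_Ioo.2 huv).image f) (fun y hy => (himg hy).2)
    have hstrict : ∀ w ∈ Set.Ioo u v, f w < L' := by
      intro w hw
      have hw' : (u + w) / 2 ∈ Set.Ioo u v := ⟨by linarith [hw.1], lt_trans (by linarith [hw.1]) hw.2⟩
      calc f w < f ((u + w)/2) := ha hw' hw (by linarith [hw.1])
        _ ≤ L' := le_csSup hbdd (mem_image_of_mem f hw')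
    refine ⟨L', h0, h1, Or.inl ?_⟩
    rw [tendsto_nhdsWithin_iff]
    exact ⟨htd, hevI.mono (fun w hw => hstrict w hw)⟩


lemma chain_left
    (hmaps : Set.MapsTo f (Set.Icc 0 1 \ (C : Set ℝ)) (Set.Icc 0 1))
    (hreg : ContDiffOn ℝ 3 f (Set.Icc 0 1 \ (C : Set ℝ)))
    (hdiffeo : ∀ x ∈ Set.Icc (0:ℝ) 1 \ (C : Set ℝ),
      derivWithin f (Set.Icc 0 1 \ (C : Set ℝ)) x ≠ 0)
    {p : ℝ} (hp0 : 0 < p) (hp1 : p ≤ 1) :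
    ∀ j : ℕ, ∃ L : ℝ, 0 ≤ L ∧ L ≤ 1 ∧
      (Tendsto f^[j] (𝓝[<] p) (𝓝[<] L) ∨ Tendsto f^[j] (𝓝[<] p) (𝓝[>] L)) ∧
      (∀ᶠ w in 𝓝[<] p, f^[j] w ∈ Set.Icc 0 1) ∧
      ∃ a, 0 < a ∧
        (StrictMonoOn f^[j] (Set.Ioo (p-a) p) ∨ StrictAntiOn f^[j] (Set.Ioo (p-a) p)) := by
  intro j
  induction j with
  | zero =>
    refine ⟨p, le_of_lt hp0, hp1, Or.inl ?_, ?_, p, hp0, Or.inl ?_⟩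
    · simp only [Function.iterate_zero]; exact tendsto_id
    · refine (eventually_mem_set.2 (Ioo_mem_nhdsLT hp0)).mono (fun w hw => ?_)
      simp only [Function.iterate_zero, id_eq]
      exact ⟨hw.1.le, le_trans hw.2.le hp1⟩
    · simp only [Function.iterate_zero]; exact strictMonoOn_id
  | succ j IH =>
    obtain ⟨L, hL0, hL1, hside, hIcc, a, ha0, hjm⟩ := IH
    have hrw : f^[j+1] = f ∘ f^[j] := Function.iterate_succ' f j
    rcases hside with htd | htd
    · have htdN : Tendsto f^[j] (𝓝[<] p) (𝓝 L) := (tendsto_nhdsWithin_iff.1 htd).1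
      have hevIio : ∀ᶠ w in 𝓝[<] p, f^[j] w ∈ Set.Iio L := (tendsto_nhdsWithin_iff.1 htd).2
      have hLpos : 0 < L := by
        obtain ⟨w, hw1, hw2⟩ := (hIcc.and hevIio).exists
        exact lt_of_le_of_lt hw1.1 hw2
      obtain ⟨b, hb0, hbsub⟩ := interval_left_in_s (C := C) hLpos hL1
      have hfm := mono_or_anti hreg hdiffeo (by linarith : L - b < L) hbsub
      obtain ⟨L', h0', h1', hside'⟩ := step_left hmaps hfm hbsub (by linarith)
      have hcomp : Tendsto f^[j+1] (𝓝[<] p) (𝓝[<] L') ∨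
          Tendsto f^[j+1] (𝓝[<] p) (𝓝[>] L') := by
        rcases hside' with h | h
        · exact Or.inl (by rw [hrw]; exact h.comp htd)
        · exact Or.inr (by rw [hrw]; exact h.comp htd)
      have hevJ : ∀ᶠ w in 𝓝[<] p, f^[j] w ∈ Set.Ioo (L-b) L :=
        htd.eventually (eventually_mem_set.2 (Ioo_mem_nhdsLT (by linarith)))
      have hIcc' : ∀ᶠ w in 𝓝[<] p, f^[j+1] w ∈ Set.Icc 0 1 := by
        filter_upwards [hevJ] with w hw
        rw [Function.iterate_succ_apply']
        exact hmaps (hbsub hw)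
      have hmemset : {w : ℝ | f^[j] w ∈ Set.Ioo (L-b) L} ∩ Set.Ioo (p-a) p ∈ 𝓝[<] p :=
        inter_mem hevJ (Ioo_mem_nhdsLT (by linarith))
      obtain ⟨l, hl, hlsub⟩ := mem_nhdsLT_iff_exists_Ioo_subset.1 hmemset
      refine ⟨L', h0', h1', hcomp, hIcc', p - l, by simp only [sub_pos]; exact hl, ?_⟩
      have hpl : p - (p - l) = l := by ring
      rw [hpl]
      have hmapsTo : Set.MapsTo f^[j] (Set.Ioo l p) (Set.Ioo (L-b) L) :=
        fun w hw => (hlsub hw).1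
      have hsubml : Set.Ioo l p ⊆ Set.Ioo (p-a) p := fun w hw => (hlsub hw).2
      rcases hjm with hjmono | hjanti
      · rcases hfm with hfmono | hfanti
        · exact Or.inl (by rw [hrw]; exact hfmono.comp (hjmono.mono hsubml) hmapsTo)
        · exact Or.inr (by rw [hrw]; exact hfanti.comp_strictMonoOn (hjmono.mono hsubml) hmapsTo)
      · rcases hfm with hfmono | hfanti
        · exact Or.inr (by rw [hrw]; exact hfmono.comp_strictAntiOn (hjanti.mono hsubml) hmapsTo)
        · exact Or.inl (by rw [hrw]; exact hfanti.comp (hjanti.mono hsubml) hmapsTo)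
    · have htdN : Tendsto f^[j] (𝓝[<] p) (𝓝 L) := (tendsto_nhdsWithin_iff.1 htd).1
      have hevIoi : ∀ᶠ w in 𝓝[<] p, f^[j] w ∈ Set.Ioi L := (tendsto_nhdsWithin_iff.1 htd).2
      have hLlt : L < 1 := by
        obtain ⟨w, hw1, hw2⟩ := (hIcc.and hevIoi).exists
        exact lt_of_lt_of_le hw2 hw1.2
      have hL0' : 0 ≤ L := hL0
      obtain ⟨b, hb0, hbsub⟩ := interval_right_in_s (C := C) hL0' hLlt
      have hfm := mono_or_anti hreg hdiffeo (by linarith : L < L + b) hbsub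
      obtain ⟨L', h0', h1', hside'⟩ := step_right hmaps hfm hbsub (by linarith)
      have hcomp : Tendsto f^[j+1] (𝓝[<] p) (𝓝[<] L') ∨
          Tendsto f^[j+1] (𝓝[<] p) (𝓝[>] L') := by
        rcases hside' with h | h
        · exact Or.inl (by rw [hrw]; exact h.comp htd)
        · exact Or.inr (by rw [hrw]; exact h.comp htd)
      have hevJ : ∀ᶠ w in 𝓝[<] p, f^[j] w ∈ Set.Ioo L (L+b) :=
        htd.eventually (eventually_mem_set.2 (Ioo_mem_nhdsGT (by linarith)))
      have hIcc' : ∀ᶠ w in 𝓝[<] p, f^[j+1] w ∈ Set.Icc 0 1 := by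
        filter_upwards [hevJ] with w hw
        rw [Function.iterate_succ_apply']
        exact hmaps (hbsub hw)
      have hmemset : {w : ℝ | f^[j] w ∈ Set.Ioo L (L+b)} ∩ Set.Ioo (p-a) p ∈ 𝓝[<] p :=
        inter_mem hevJ (Ioo_mem_nhdsLT (by linarith))
      obtain ⟨l, hl, hlsub⟩ := mem_nhdsLT_iff_exists_Ioo_subset.1 hmemset
      refine ⟨L', h0', h1', hcomp, hIcc', p - l, by simp only [sub_pos]; exact hl, ?_⟩
      have hpl : p - (p - l) = l := by ring
      rw [hpl]
      have hmapsTo : Set.MapsTo f^[j] (Set.Ioo l p) (Set.Ioo L (L+b)) :=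
        fun w hw => (hlsub hw).1
      have hsubml : Set.Ioo l p ⊆ Set.Ioo (p-a) p := fun w hw => (hlsub hw).2
      rcases hjm with hjmono | hjanti
      · rcases hfm with hfmono | hfanti
        · exact Or.inl (by rw [hrw]; exact hfmono.comp (hjmono.mono hsubml) hmapsTo)
        · exact Or.inr (by rw [hrw]; exact hfanti.comp_strictMonoOn (hjmono.mono hsubml) hmapsTo)
      · rcases hfm with hfmono | hfanti
        · exact Or.inr (by rw [hrw]; exact hfmono.comp_strictAntiOn (hjanti.mono hsubml) hmapsTo)
        · exact Or.inl (by rw [hrw]; exact hfanti.comp (hjanti.mono hsubml) hmapsTo)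
lemma chain_right
    (hmaps : Set.MapsTo f (Set.Icc 0 1 \ (C : Set ℝ)) (Set.Icc 0 1))
    (hreg : ContDiffOn ℝ 3 f (Set.Icc 0 1 \ (C : Set ℝ)))
    (hdiffeo : ∀ x ∈ Set.Icc (0:ℝ) 1 \ (C : Set ℝ),
      derivWithin f (Set.Icc 0 1 \ (C : Set ℝ)) x ≠ 0)
    {p : ℝ} (hp0 : 0 ≤ p) (hp1 : p < 1) :
    ∀ j : ℕ, ∃ L : ℝ, 0 ≤ L ∧ L ≤ 1 ∧
      (Tendsto f^[j] (𝓝[>] p) (𝓝[<] L) ∨ Tendsto f^[j] (𝓝[>] p) (𝓝[>] L)) ∧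
      (∀ᶠ w in 𝓝[>] p, f^[j] w ∈ Set.Icc 0 1) ∧
      ∃ a, 0 < a ∧
        (StrictMonoOn f^[j] (Set.Ioo p (p+a)) ∨ StrictAntiOn f^[j] (Set.Ioo p (p+a))) := by
  intro j
  induction j with
  | zero =>
    refine ⟨p, hp0, le_of_lt hp1, Or.inr ?_, ?_, 1 - p, by linarith, Or.inl ?_⟩
    · simp only [Function.iterate_zero]; exact tendsto_id
    · refine (eventually_mem_set.2 (Ioo_mem_nhdsGT hp1)).mono (fun w hw => ?_)
      simp only [Function.iterate_zero, id_eq]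
      exact ⟨le_trans hp0 hw.1.le, hw.2.le⟩
    · simp only [Function.iterate_zero]; exact strictMonoOn_id
  | succ j IH =>
    obtain ⟨L, hL0, hL1, hside, hIcc, a, ha0, hjm⟩ := IH
    have hrw : f^[j+1] = f ∘ f^[j] := Function.iterate_succ' f j
    rcases hside with htd | htd
    · have htdN : Tendsto f^[j] (𝓝[>] p) (𝓝 L) := (tendsto_nhdsWithin_iff.1 htd).1
      have hevIio : ∀ᶠ w in 𝓝[>] p, f^[j] w ∈ Set.Iio L := (tendsto_nhdsWithin_iff.1 htd).2
      have hLpos : 0 < L := by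
        obtain ⟨w, hw1, hw2⟩ := (hIcc.and hevIio).exists
        exact lt_of_le_of_lt hw1.1 hw2
      obtain ⟨b, hb0, hbsub⟩ := interval_left_in_s (C := C) hLpos hL1
      have hfm := mono_or_anti hreg hdiffeo (by linarith : L - b < L) hbsub
      obtain ⟨L', h0', h1', hside'⟩ := step_left hmaps hfm hbsub (by linarith)
      have hcomp : Tendsto f^[j+1] (𝓝[>] p) (𝓝[<] L') ∨
          Tendsto f^[j+1] (𝓝[>] p) (𝓝[>] L') := by
        rcases hside' with h | h
        · exact Or.inl (by rw [hrw]; exact h.comp htd)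
        · exact Or.inr (by rw [hrw]; exact h.comp htd)
      have hevJ : ∀ᶠ w in 𝓝[>] p, f^[j] w ∈ Set.Ioo (L-b) L :=
        htd.eventually (eventually_mem_set.2 (Ioo_mem_nhdsLT (by linarith)))
      have hIcc' : ∀ᶠ w in 𝓝[>] p, f^[j+1] w ∈ Set.Icc 0 1 := by
        filter_upwards [hevJ] with w hw
        rw [Function.iterate_succ_apply']
        exact hmaps (hbsub hw)
      have hmemset : {w : ℝ | f^[j] w ∈ Set.Ioo (L-b) L} ∩ Set.Ioo p (p+a) ∈ 𝓝[>] p :=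
        inter_mem hevJ (Ioo_mem_nhdsGT (by linarith))
      obtain ⟨r, hr, hrsub⟩ := mem_nhdsGT_iff_exists_Ioo_subset.1 hmemset
      refine ⟨L', h0', h1', hcomp, hIcc', r - p, by simp only [sub_pos]; exact hr, ?_⟩
      have hpl : p + (r - p) = r := by ring
      rw [hpl]
      have hmapsTo : Set.MapsTo f^[j] (Set.Ioo p r) (Set.Ioo (L-b) L) :=
        fun w hw => (hrsub hw).1
      have hsubml : Set.Ioo p r ⊆ Set.Ioo p (p+a) := fun w hw => (hrsub hw).2
      rcases hjm with hjmono | hjanti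
      · rcases hfm with hfmono | hfanti
        · exact Or.inl (by rw [hrw]; exact hfmono.comp (hjmono.mono hsubml) hmapsTo)
        · exact Or.inr (by rw [hrw]; exact hfanti.comp_strictMonoOn (hjmono.mono hsubml) hmapsTo)
      · rcases hfm with hfmono | hfanti
        · exact Or.inr (by rw [hrw]; exact hfmono.comp_strictAntiOn (hjanti.mono hsubml) hmapsTo)
        · exact Or.inl (by rw [hrw]; exact hfanti.comp (hjanti.mono hsubml) hmapsTo)
    · have htdN : Tendsto f^[j] (𝓝[>] p) (𝓝 L) := (tendsto_nhdsWithin_iff.1 htd).1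
      have hevIoi : ∀ᶠ w in 𝓝[>] p, f^[j] w ∈ Set.Ioi L := (tendsto_nhdsWithin_iff.1 htd).2
      have hLlt : L < 1 := by
        obtain ⟨w, hw1, hw2⟩ := (hIcc.and hevIoi).exists
        exact lt_of_lt_of_le hw2 hw1.2
      have hL0' : 0 ≤ L := hL0
      obtain ⟨b, hb0, hbsub⟩ := interval_right_in_s (C := C) hL0' hLlt
      have hfm := mono_or_anti hreg hdiffeo (by linarith : L < L + b) hbsub
      obtain ⟨L', h0', h1', hside'⟩ := step_right hmaps hfm hbsub (by linarith)
      have hcomp : Tendsto f^[j+1] (𝓝[>] p) (𝓝[<] L') ∨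
          Tendsto f^[j+1] (𝓝[>] p) (𝓝[>] L') := by
        rcases hside' with h | h
        · exact Or.inl (by rw [hrw]; exact h.comp htd)
        · exact Or.inr (by rw [hrw]; exact h.comp htd)
      have hevJ : ∀ᶠ w in 𝓝[>] p, f^[j] w ∈ Set.Ioo L (L+b) :=
        htd.eventually (eventually_mem_set.2 (Ioo_mem_nhdsGT (by linarith)))
      have hIcc' : ∀ᶠ w in 𝓝[>] p, f^[j+1] w ∈ Set.Icc 0 1 := by
        filter_upwards [hevJ] with w hw
        rw [Function.iterate_succ_apply']
        exact hmaps (hbsub hw)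
      have hmemset : {w : ℝ | f^[j] w ∈ Set.Ioo L (L+b)} ∩ Set.Ioo p (p+a) ∈ 𝓝[>] p :=
        inter_mem hevJ (Ioo_mem_nhdsGT (by linarith))
      obtain ⟨r, hr, hrsub⟩ := mem_nhdsGT_iff_exists_Ioo_subset.1 hmemset
      refine ⟨L', h0', h1', hcomp, hIcc', r - p, by simp only [sub_pos]; exact hr, ?_⟩
      have hpl : p + (r - p) = r := by ring
      rw [hpl]
      have hmapsTo : Set.MapsTo f^[j] (Set.Ioo p r) (Set.Ioo L (L+b)) :=
        fun w hw => (hrsub hw).1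
      have hsubml : Set.Ioo p r ⊆ Set.Ioo p (p+a) := fun w hw => (hrsub hw).2
      rcases hjm with hjmono | hjanti
      · rcases hfm with hfmono | hfanti
        · exact Or.inl (by rw [hrw]; exact hfmono.comp (hjmono.mono hsubml) hmapsTo)
        · exact Or.inr (by rw [hrw]; exact hfanti.comp_strictMonoOn (hjmono.mono hsubml) hmapsTo)
      · rcases hfm with hfmono | hfanti
        · exact Or.inr (by rw [hrw]; exact hfmono.comp_strictAntiOn (hjanti.mono hsubml) hmapsTo)
        · exact Or.inl (by rw [hrw]; exact hfanti.comp (hjanti.mono hsubml) hmapsTo)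

lemma omega_eq_of_conv {f : ℝ → ℝ} {n : ℕ} (hn1 : 1 ≤ n) {L : ℕ → ℝ} {l : Filter ℝ}
    (hL : ∀ r, Tendsto f^[r] l (𝓝 (L r)))
    {w : ℝ} (hw : Tendsto (fun k => (f^[n])^[k] w) atTop l) :
    omegaSet f w = {y | ∃ r < n, L r = y} := by
  have hiter : ∀ (r k : ℕ), f^[r + n*k] w = f^[r] ((f^[n])^[k] w) := by
    intro r k
    rw [Function.iterate_add_apply, Function.iterate_mul]
  have hr' : ∀ r, Tendsto (fun k => f^[r + n*k] w) atTop (𝓝 (L r)) := by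
    intro r
    have := (hL r).comp hw
    refine this.congr (fun k => ?_)
    exact (hiter r k).symm
  ext y
  constructor
  · -- cluster point must be one of the L r
    intro hy
    by_contra hcon
    simp only [Set.mem_setOf_eq, not_exists] at hcon
    have hcon' : ∀ r < n, L r ≠ y := fun r hr h => hcon r ⟨hr, h⟩
    have hne : (Finset.range n).Nonempty := ⟨0, Finset.mem_range.2 (by omega)⟩
    set d := (Finset.range n).inf' hne (fun r => |y - L r|) with hd
    have hd0 : 0 < d := by
      rw [hd, Finset.lt_inf'_iff]
      intro r hr
      have : L r ≠ y := hcon' r (Finset.mem_range.1 hr)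
      exact abs_pos.2 (sub_ne_zero.2 (fun h => this h.symm))
    have htt : ∀ r, ∀ᶠ k in atTop, |f^[r + n*k] w - L r| < d/2 := by
      intro r
      have := Metric.tendsto_atTop.1 (hr' r) (d/2) (by linarith)
      obtain ⟨N, hN⟩ := this
      exact eventually_atTop.2 ⟨N, fun k hk => by
        have := hN k hk; rwa [Real.dist_eq] at this⟩
    have hall : ∀ᶠ k in atTop, ∀ r ∈ Finset.range n, |f^[r + n*k] w - L r| < d/2 :=
      (eventually_all_finset _).2 (fun r _ => htt r)
    have hdiv : Tendsto (fun m : ℕ => m / n) atTop atTop := by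
      rw [Filter.Tendsto, map_div_atTop_eq_nat n (by omega)]
    have hev : ∀ᶠ m in atTop, ∃ r < n, |f^[m] w - L r| < d/2 := by
      refine (hdiv.eventually hall).mono (fun m hm => ?_)
      refine ⟨m % n, Nat.mod_lt _ (by omega), ?_⟩
      have := hm (m % n) (Finset.mem_range.2 (Nat.mod_lt _ (by omega)))
      rwa [Nat.mod_add_div m n] at this
    have hfreq : ∃ᶠ m in atTop, |f^[m] w - y| < d/2 := by
      have := mapClusterPt_iff_frequently.1 hy (Metric.ball y (d/2)) (Metric.ball_mem_nhds y (by linarith))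
      exact this.mono (fun m hm => by rwa [Metric.mem_ball, Real.dist_eq] at hm)
    obtain ⟨m, h1, h2⟩ := (hfreq.and_eventually hev).exists
    obtain ⟨r, hrn, hr2⟩ := h2
    have hle : d ≤ |y - L r| := Finset.inf'_le _ (Finset.mem_range.2 hrn)
    have : |y - L r| ≤ |y - f^[m] w| + |f^[m] w - L r| := abs_sub_le _ _ _
    rw [abs_sub_comm y (f^[m] w)] at this
    linarith
  · rintro ⟨r, hrn, rfl⟩
    have hcl : MapClusterPt (L r) atTop (fun k => f^[r + n*k] w) :=
      (hr' r).mapClusterPt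
    refine MapClusterPt.of_comp (φ := fun k => r + n*k) ?_ hcl
    refine tendsto_atTop_mono (fun k => ?_) tendsto_id
    calc (k:ℕ) = 1 * k := (one_mul k).symm
      _ ≤ n * k := Nat.mul_le_mul_right k hn1
      _ ≤ r + n * k := Nat.le_add_left _ _

end Helpers

lemma hard_left {f : ℝ → ℝ} {C : Finset ℝ}
    (hmaps : Set.MapsTo f (Set.Icc 0 1 \ (C : Set ℝ)) (Set.Icc 0 1))
    (hreg : ContDiffOn ℝ 3 f (Set.Icc 0 1 \ (C : Set ℝ)))
    (hdiffeo : ∀ x ∈ Set.Icc (0:ℝ) 1 \ (C : Set ℝ),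
      derivWithin f (Set.Icc 0 1 \ (C : Set ℝ)) x ≠ 0)
    {x : ℝ} (hx : x ∈ Set.Icc (0:ℝ) 1)
    (horb : ∀ n : ℕ, f^[n] x ∉ (C : Set ℝ))
    (hxB0 : ∀ A : Set ℝ, IsAttractingPeriodicLikeOrbit f A → ¬ omegaSet f x ⊆ A)
    {p : ℝ} {n : ℕ} (hn : IsLeftPeriodic f p n)
    (horbacc : p ∈ closure (forwardOrbit f x ∩ Set.Ico 0 p)) :
    p ∈ closure (omegaSet f x ∩ Set.Ico 0 p) := by
  classical
  have horbIcc := orbit_mem_Icc hmaps hx horb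
  rcases le_or_gt p 0 with hp0' | hp0
  · exfalso
    rw [Set.Ico_eq_empty (by simpa using hp0' : ¬ (0:ℝ) < p), Set.inter_empty,
      closure_empty] at horbacc
    exact horbacc
  have hp1 : p ≤ 1 := by
    have hsub : closure (forwardOrbit f x ∩ Set.Ico 0 p) ⊆ Set.Icc 0 1 := by
      apply closure_minimal _ isClosed_Icc
      rintro y ⟨⟨m, hm⟩, _⟩
      rw [← hm]; exact horbIcc m
    exact (hsub horbacc).2
  have hnper := hn
  obtain ⟨⟨hn1, htendaux, ε, hε0, hmapsIio⟩, _hmin⟩ := hn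
  by_contra hcon
  have hδex : ∃ δ > 0, ∀ y ∈ omegaSet f x, y ∉ Set.Ioo (p - δ) p := by
    rw [Metric.mem_closure_iff] at hcon
    push_neg at hcon
    obtain ⟨δ, hδ0, hδ⟩ := hcon
    refine ⟨min δ p, lt_min hδ0 hp0, fun y hy hyI => ?_⟩
    have h0y : (0:ℝ) ≤ y := by
      have h1 : p - min δ p < y := hyI.1
      have h2 : min δ p ≤ p := min_le_right δ p
      linarith
    have hmem : y ∈ omegaSet f x ∩ Set.Ico 0 p := ⟨hy, h0y, hyI.2⟩
    have hd := hδ y hmem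
    rw [Real.dist_eq, abs_of_pos (by linarith [hyI.2] : (0:ℝ) < p - y)] at hd
    have hlt : p - y < min δ p := by linarith [hyI.1]
    linarith [lt_of_lt_of_le hlt (min_le_left δ p)]
  obtain ⟨δ, hδ0, hω⟩ := hδex
  -- the chain of lateral limits
  choose L hL0b hL1b hside hIcc ha using chain_left hmaps hreg hdiffeo hp0 hp1
  have hLtend : ∀ j, Tendsto f^[j] (𝓝[<] p) (𝓝 (L j)) := by
    intro j
    rcases hside j with h | h
    exacts [(tendsto_nhdsWithin_iff.1 h).1, (tendsto_nhdsWithin_iff.1 h).1]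
  obtain ⟨a₁, ha₁0, hmono1⟩ := ha n
  set a := min a₁ ε with hadef
  have ha0 : 0 < a := lt_min ha₁0 hε0
  have hsuba : Set.Ioo (p - a) p ⊆ Set.Ioo (p - a₁) p := by
    apply Set.Ioo_subset_Ioo _ le_rfl
    have h1 : a ≤ a₁ := min_le_left a₁ ε
    linarith
  have hlt : ∀ w ∈ Set.Ioo (p - a) p, f^[n] w < p := by
    intro w hw
    refine hmapsIio w ⟨?_, hw.2⟩
    have h1 : a ≤ ε := min_le_right a₁ ε
    have h2 := hw.1
    linarith
  have hg : StrictMonoOn f^[n] (Set.Ioo (p - a) p) := by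
    have hmono' : StrictMonoOn f^[n] (Set.Ioo (p-a) p) ∨
        StrictAntiOn f^[n] (Set.Ioo (p-a) p) := by
      rcases hmono1 with h | h
      · exact Or.inl (h.mono hsuba)
      · exact Or.inr (h.mono hsuba)
    rcases hmono' with h | hanti
    · exact h
    exfalso
    set w := p - a/2 with hwdef
    have hwm : w ∈ Set.Ioo (p - a) p := ⟨by simp only [hwdef]; linarith,
      by simp only [hwdef]; linarith⟩
    have hev : ∀ᶠ w' in 𝓝[<] p, f^[n] w' ≤ f^[n] w := by
      refine (eventually_mem_set.2 (Ioo_mem_nhdsLT hwm.2)).mono (fun w' hw' => ?_)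
      exact (hanti hwm ⟨lt_trans hwm.1 hw'.1, hw'.2⟩ hw'.1).le
    have hple : p ≤ f^[n] w := le_of_tendsto htendaux hev
    exact absurd (hlt w hwm) (not_lt.2 hple)
  -- choose the scale c and the entry width η
  set c := min a δ / 2 with hcdef
  have hc0 : 0 < c := by simp only [hcdef]; positivity
  have hca : c < a := by
    have := min_le_left a δ
    simp only [hcdef]; linarith
  have hcδ : c < δ := by
    have := min_le_right a δ
    simp only [hcdef]; linarith
  have hkeymem : {w : ℝ | w ∈ Set.Ioo (p-a) p ∧ f^[n] w ∈ Set.Ioo (p-c) p} ∈ 𝓝[<] p := by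
    have h1 : {w : ℝ | w ∈ Set.Ioo (p-a) p} ∈ 𝓝[<] p := Ioo_mem_nhdsLT (by linarith)
    have h2 : {w : ℝ | f^[n] w ∈ Set.Ioi (p-c)} ∈ 𝓝[<] p := by
      have : Set.Ioi (p-c) ∈ 𝓝 p := Ioi_mem_nhds (by linarith)
      exact htendaux this
    have := inter_mem h1 h2
    refine mem_of_superset this ?_
    rintro w ⟨hw1, hw2⟩
    exact ⟨hw1, hw2, hlt w hw1⟩
  obtain ⟨l, hl, hlsub⟩ := mem_nhdsLT_iff_exists_Ioo_subset.1 hkeymem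
  set η := min (p - l) c with hηdef
  have hη0 : 0 < η := lt_min (by simp only [sub_pos]; exact hl) hc0
  have hηc : η ≤ c := min_le_right _ _
  have hkey : ∀ w ∈ Set.Ioo (p - η) p,
      w ∈ Set.Ioo (p-a) p ∧ f^[n] w ∈ Set.Ioo (p-c) p := by
    intro w hw
    apply hlsub
    constructor
    · have h1 : η ≤ p - l := min_le_left _ _
      have := hw.1
      linarith
    · exact hw.2
  by_cases hcase : ∃ m : ℕ, f^[m] x ∈ Set.Ioo (p-η) p ∧
      ∀ k, (f^[n])^[k] (f^[m] x) ∈ Set.Ioo (p-η) p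
  · -- Case 1: some orbit point stays forever; p is attracting from the left
    obtain ⟨m, hzmem, hstay⟩ := hcase
    set z := f^[m] x with hzdef
    have hcluster : ∀ y, MapClusterPt y atTop (fun k => (f^[n])^[k] z) → y = p := by
      intro y hy
      have hyo : y ∈ omegaSet f x := by
        apply mapClusterPt_of_comp' (u := fun m' => f^[m'] x) (φ := fun k => n*k + m)
        · apply tendsto_atTop_mono (fun k => ?_) tendsto_id
          calc (k:ℕ) = 1*k := (one_mul k).symm
            _ ≤ n*k := Nat.mul_le_mul_right k hn1
            _ ≤ n*k + m := Nat.le_add_right _ _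
        · have : (fun k => f^[n*k + m] x) = fun k => (f^[n])^[k] z := by
            funext k
            rw [Function.iterate_add_apply, Function.iterate_mul, hzdef]
          rw [this]
          exact hy
      have hyI : y ∈ Set.Icc (p - η) p :=
        mapClusterPt_mem_Icc (fun k => ⟨(hstay k).1.le, (hstay k).2.le⟩) hy
      by_contra hne
      have hylt : y < p := lt_of_le_of_ne hyI.2 hne
      exact hω y hyo ⟨by linarith [hyI.1], hylt⟩
    have htz : Tendsto (fun k => (f^[n])^[k] z) atTop (𝓝[<] p) := by
      rw [tendsto_nhdsWithin_iff]
      refine ⟨tendsto_of_unique_cluster (fun k => ⟨(hstay k).1.le, (hstay k).2.le⟩) hcluster, ?_⟩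
      exact Eventually.of_forall (fun k => (hstay k).2)
    have hprop : ∀ w ∈ Set.Ico z p, ∀ k, (f^[n])^[k] w ∈ Set.Ico ((f^[n])^[k] z) p := by
      intro w hw k
      induction k with
      | zero => simpa using hw
      | succ k ih =>
        have hzk := hstay k
        have hwk : (f^[n])^[k] w ∈ Set.Ioo (p-η) p := ⟨lt_of_lt_of_le hzk.1 ih.1, ih.2⟩
        constructor
        · rw [Function.iterate_succ_apply', Function.iterate_succ_apply']
          exact hg.monotoneOn (hkey _ hzk).1 (hkey _ hwk).1 ih.1
        · rw [Function.iterate_succ_apply']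
          exact (hkey _ hwk).2.2
    have htw : ∀ w ∈ Set.Ico z p, Tendsto (fun k => (f^[n])^[k] w) atTop (𝓝[<] p) := by
      intro w hw
      rw [tendsto_nhdsWithin_iff]
      constructor
      · refine tendsto_of_tendsto_of_tendsto_of_le_of_le
          (tendsto_nhdsWithin_iff.1 htz).1 tendsto_const_nhds
          (fun k => (hprop w hw k).1) (fun k => (hprop w hw k).2.le)
      · exact Eventually.of_forall (fun k => (hprop w hw k).2)
    set A : Set ℝ := {y | ∃ r < n, L r = y} with hAdef
    have homega : ∀ w ∈ Set.Ico z p, omegaSet f w = A := fun w hw =>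
      omega_eq_of_conv hn1 hLtend (htw w hw)
    have hlat : leftLateralOrbit f p n = A := by
      have hlim : ∀ j, leftIter f j p = L j := fun j => (hLtend j).limUnder_eq
      unfold leftLateralOrbit
      simp only [hlim, hAdef]
    have hattr : IsAttractingPeriodicLikeOrbit f (leftLateralOrbit f p n) := by
      left
      refine ⟨p, n, hnper, rfl, p - z, by linarith [hzmem.2], fun w hw => ?_⟩
      rw [hlat]
      apply homega
      have hzz : p - (p - z) = z := by ring
      rw [hzz] at hw
      exact ⟨hw.1.le, hw.2⟩
    apply hxB0 _ hattr
    have hωx : omegaSet f x = A := by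
      rw [← omegaSet_iterate f x m, ← hzdef, homega z ⟨le_refl z, hzmem.2⟩]
    rw [hωx, hlat]
  · -- Case 2: every entering orbit point escapes; ω accumulates inside (p-δ, p)
    push_neg at hcase
    have hfreq : ∀ N : ℕ, ∃ m' ≥ N, f^[m'] x ∈ Set.Icc (p - c) (p - η) := by
      intro N
      obtain ⟨m, hmN, hmem⟩ := frequently_orbit_near_left horbacc η hη0 N
      obtain ⟨k₀, hk₀⟩ := hcase m hmem
      have hex : ∃ k, (f^[n])^[k] (f^[m] x) ∉ Set.Ioo (p-η) p := ⟨k₀, hk₀⟩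
      set k := Nat.find hex with hkdef
      have hkspec : (f^[n])^[k] (f^[m] x) ∉ Set.Ioo (p-η) p := Nat.find_spec hex
      have hkpos : 0 < k := by
        rcases Nat.eq_zero_or_pos k with h0 | h
        · exfalso; apply hkspec; rw [h0]; simpa using hmem
        · exact h
      have hprev : (f^[n])^[k-1] (f^[m] x) ∈ Set.Ioo (p-η) p := by
        have := Nat.find_min hex (show k - 1 < k by omega)
        simpa using this
      have hstep : (f^[n])^[k] (f^[m] x) ∈ Set.Ioo (p-c) p := by
        have hkk : k = (k-1) + 1 := by omega
        rw [hkk, Function.iterate_succ_apply']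
        exact (hkey _ hprev).2
      have hle : (f^[n])^[k] (f^[m] x) ≤ p - η := by
        by_contra hgt
        push_neg at hgt
        exact hkspec ⟨hgt, hstep.2⟩
      refine ⟨n*k + m, le_trans hmN (Nat.le_add_left m _), ?_⟩
      have : f^[n*k + m] x = (f^[n])^[k] (f^[m] x) := by
        rw [Function.iterate_add_apply, Function.iterate_mul]
      rw [this]
      exact ⟨hstep.1.le, hle⟩
    have hfreq' : ∃ᶠ m in atTop, f^[m] x ∈ Set.Icc (p-c) (p-η) :=
      frequently_atTop.2 (fun N => hfreq N)
    obtain ⟨y, hyK, hy⟩ := exists_mapClusterPt_of_frequently isCompact_Icc hfreq'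
    exact hω y hy ⟨by linarith [hyK.1], by linarith [hyK.2]⟩

lemma frequently_orbit_near_right {f : ℝ → ℝ} {x p : ℝ}
    (horbacc : p ∈ closure (forwardOrbit f x ∩ Set.Ioc p 1)) :
    ∀ η > 0, ∀ N : ℕ, ∃ m ≥ N, f^[m] x ∈ Set.Ioo p (p + η) := by
  intro η hη N
  classical
  set ds : Finset ℝ := ((Finset.range N).image fun m => f^[m] x - p).filter (fun t => 0 < t)
    with hds
  set η' : ℝ := if h : ds.Nonempty then min η (ds.min' h) else η with hη'
  have hη'pos : 0 < η' := by
    rw [hη']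
    split
    · rename_i h
      refine lt_min hη ?_
      have hmm := ds.min'_mem h
      simp only [hds, Finset.mem_filter] at hmm
      exact hmm.2
    · exact hη
  have hη'le : η' ≤ η := by
    rw [hη']; split
    · exact min_le_left _ _
    · exact le_refl _
  obtain ⟨b, hb, hbd⟩ := Metric.mem_closure_iff.1 horbacc η' hη'pos
  obtain ⟨⟨m, hm'⟩, hbi⟩ := hb
  have hm : f^[m] x = b := hm'
  have hblt : b < p + η' := by
    have h1 : |p - b| < η' := by simpa [Real.dist_eq] using hbd
    have h2 := abs_lt.1 h1
    linarith [h2.1]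
  have hbIoo : b ∈ Set.Ioo p (p + η) := ⟨hbi.1, lt_of_lt_of_le hblt (by linarith)⟩
  refine ⟨m, ?_, by rw [hm]; exact hbIoo⟩
  by_contra hmN
  push_neg at hmN
  have hmem : b - p ∈ ds := by
    rw [hds]
    refine Finset.mem_filter.2 ⟨Finset.mem_image.2 ⟨m, Finset.mem_range.2 hmN, by rw [hm]⟩, ?_⟩
    simpa using hbi.1
  have hne : ds.Nonempty := ⟨_, hmem⟩
  have : η' ≤ b - p := by
    rw [hη', dif_pos hne]
    exact le_trans (min_le_right _ _) (ds.min'_le _ hmem)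
  linarith

lemma hard_right {f : ℝ → ℝ} {C : Finset ℝ}
    (hmaps : Set.MapsTo f (Set.Icc 0 1 \ (C : Set ℝ)) (Set.Icc 0 1))
    (hreg : ContDiffOn ℝ 3 f (Set.Icc 0 1 \ (C : Set ℝ)))
    (hdiffeo : ∀ x ∈ Set.Icc (0:ℝ) 1 \ (C : Set ℝ),
      derivWithin f (Set.Icc 0 1 \ (C : Set ℝ)) x ≠ 0)
    {x : ℝ} (hx : x ∈ Set.Icc (0:ℝ) 1)
    (horb : ∀ n : ℕ, f^[n] x ∉ (C : Set ℝ))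
    (hxB0 : ∀ A : Set ℝ, IsAttractingPeriodicLikeOrbit f A → ¬ omegaSet f x ⊆ A)
    {p : ℝ} {n : ℕ} (hn : IsRightPeriodic f p n)
    (horbacc : p ∈ closure (forwardOrbit f x ∩ Set.Ioc p 1)) :
    p ∈ closure (omegaSet f x ∩ Set.Ioc p 1) := by
  classical
  have horbIcc := orbit_mem_Icc hmaps hx horb
  rcases le_or_gt 1 p with hp1' | hp1
  · exfalso
    rw [Set.Ioc_eq_empty (by simpa using hp1' : ¬ p < 1), Set.inter_empty,
      closure_empty] at horbacc
    exact horbacc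
  have hp0 : 0 ≤ p := by
    have hsub : closure (forwardOrbit f x ∩ Set.Ioc p 1) ⊆ Set.Icc 0 1 := by
      apply closure_minimal _ isClosed_Icc
      rintro y ⟨⟨m, hm⟩, _⟩
      rw [← hm]; exact horbIcc m
    exact (hsub horbacc).1
  have hnper := hn
  obtain ⟨⟨hn1, htendaux, ε, hε0, hmapsIoi⟩, _hmin⟩ := hn
  by_contra hcon
  have hδex : ∃ δ > 0, ∀ y ∈ omegaSet f x, y ∉ Set.Ioo p (p + δ) := by
    rw [Metric.mem_closure_iff] at hcon
    push_neg at hcon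
    obtain ⟨δ, hδ0, hδ⟩ := hcon
    refine ⟨min δ (1 - p), lt_min hδ0 (by linarith), fun y hy hyI => ?_⟩
    have h1y : y ≤ 1 := by
      have h1 : y < p + min δ (1 - p) := hyI.2
      have h2 : min δ (1 - p) ≤ 1 - p := min_le_right _ _
      linarith
    have hmem : y ∈ omegaSet f x ∩ Set.Ioc p 1 := ⟨hy, hyI.1, h1y⟩
    have hd := hδ y hmem
    rw [Real.dist_eq, abs_of_neg (by linarith [hyI.1] : p - y < 0)] at hd
    have hlt : y - p < min δ (1 - p) := by linarith [hyI.2]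
    have : -(p - y) = y - p := by ring
    rw [this] at hd
    linarith [lt_of_lt_of_le hlt (min_le_left δ (1 - p))]
  obtain ⟨δ, hδ0, hω⟩ := hδex
  choose L hL0b hL1b hside hIcc ha using chain_right hmaps hreg hdiffeo hp0 hp1
  have hLtend : ∀ j, Tendsto f^[j] (𝓝[>] p) (𝓝 (L j)) := by
    intro j
    rcases hside j with h | h
    exacts [(tendsto_nhdsWithin_iff.1 h).1, (tendsto_nhdsWithin_iff.1 h).1]
  obtain ⟨a₁, ha₁0, hmono1⟩ := ha n
  set a := min a₁ ε with hadef
  have ha0 : 0 < a := lt_min ha₁0 hε0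
  have hsuba : Set.Ioo p (p + a) ⊆ Set.Ioo p (p + a₁) := by
    apply Set.Ioo_subset_Ioo le_rfl
    have h1 : a ≤ a₁ := min_le_left a₁ ε
    linarith
  have hlt : ∀ w ∈ Set.Ioo p (p + a), p < f^[n] w := by
    intro w hw
    refine hmapsIoi w ⟨hw.1, ?_⟩
    have h1 : a ≤ ε := min_le_right a₁ ε
    have h2 := hw.2
    linarith
  have hg : StrictMonoOn f^[n] (Set.Ioo p (p + a)) := by
    have hmono' : StrictMonoOn f^[n] (Set.Ioo p (p+a)) ∨
        StrictAntiOn f^[n] (Set.Ioo p (p+a)) := by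
      rcases hmono1 with h | h
      · exact Or.inl (h.mono hsuba)
      · exact Or.inr (h.mono hsuba)
    rcases hmono' with h | hanti
    · exact h
    exfalso
    set w := p + a/2 with hwdef
    have hwm : w ∈ Set.Ioo p (p + a) := ⟨by simp only [hwdef]; linarith,
      by simp only [hwdef]; linarith⟩
    have hev : ∀ᶠ w' in 𝓝[>] p, f^[n] w ≤ f^[n] w' := by
      refine (eventually_mem_set.2 (Ioo_mem_nhdsGT hwm.1)).mono (fun w' hw' => ?_)
      exact (hanti ⟨hw'.1, lt_trans hw'.2 hwm.2⟩ hwm hw'.2).le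
    have hple : f^[n] w ≤ p := ge_of_tendsto htendaux hev
    exact absurd (hlt w hwm) (not_lt.2 hple)
  set c := min a δ / 2 with hcdef
  have hc0 : 0 < c := by simp only [hcdef]; positivity
  have hca : c < a := by
    have := min_le_left a δ
    simp only [hcdef]; linarith
  have hcδ : c < δ := by
    have := min_le_right a δ
    simp only [hcdef]; linarith
  have hkeymem : {w : ℝ | w ∈ Set.Ioo p (p+a) ∧ f^[n] w ∈ Set.Ioo p (p+c)} ∈ 𝓝[>] p := by
    have h1 : {w : ℝ | w ∈ Set.Ioo p (p+a)} ∈ 𝓝[>] p := Ioo_mem_nhdsGT (by linarith)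
    have h2 : {w : ℝ | f^[n] w ∈ Set.Iio (p+c)} ∈ 𝓝[>] p := by
      have : Set.Iio (p+c) ∈ 𝓝 p := Iio_mem_nhds (by linarith)
      exact htendaux this
    have := inter_mem h1 h2
    refine mem_of_superset this ?_
    rintro w ⟨hw1, hw2⟩
    exact ⟨hw1, hlt w hw1, hw2⟩
  obtain ⟨r, hr, hrsub⟩ := mem_nhdsGT_iff_exists_Ioo_subset.1 hkeymem
  set η := min (r - p) c with hηdef
  have hη0 : 0 < η := lt_min (by simp only [sub_pos]; exact hr) hc0
  have hηc : η ≤ c := min_le_right _ _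
  have hkey : ∀ w ∈ Set.Ioo p (p + η),
      w ∈ Set.Ioo p (p+a) ∧ f^[n] w ∈ Set.Ioo p (p+c) := by
    intro w hw
    apply hrsub
    constructor
    · exact hw.1
    · have h1 : η ≤ r - p := min_le_left _ _
      have := hw.2
      linarith
  by_cases hcase : ∃ m : ℕ, f^[m] x ∈ Set.Ioo p (p+η) ∧
      ∀ k, (f^[n])^[k] (f^[m] x) ∈ Set.Ioo p (p+η)
  · obtain ⟨m, hzmem, hstay⟩ := hcase
    set z := f^[m] x with hzdef
    have hcluster : ∀ y, MapClusterPt y atTop (fun k => (f^[n])^[k] z) → y = p := by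
      intro y hy
      have hyo : y ∈ omegaSet f x := by
        apply mapClusterPt_of_comp' (u := fun m' => f^[m'] x) (φ := fun k => n*k + m)
        · apply tendsto_atTop_mono (fun k => ?_) tendsto_id
          calc (k:ℕ) = 1*k := (one_mul k).symm
            _ ≤ n*k := Nat.mul_le_mul_right k hn1
            _ ≤ n*k + m := Nat.le_add_right _ _
        · have : (fun k => f^[n*k + m] x) = fun k => (f^[n])^[k] z := by
            funext k
            rw [Function.iterate_add_apply, Function.iterate_mul, hzdef]
          rw [this]
          exact hy
      have hyI : y ∈ Set.Icc p (p + η) :=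
        mapClusterPt_mem_Icc (fun k => ⟨(hstay k).1.le, (hstay k).2.le⟩) hy
      by_contra hne
      have hygt : p < y := lt_of_le_of_ne hyI.1 (fun h => hne h.symm)
      exact hω y hyo ⟨hygt, by linarith [hyI.2]⟩
    have htz : Tendsto (fun k => (f^[n])^[k] z) atTop (𝓝[>] p) := by
      rw [tendsto_nhdsWithin_iff]
      refine ⟨tendsto_of_unique_cluster (fun k => ⟨(hstay k).1.le, (hstay k).2.le⟩) hcluster, ?_⟩
      exact Eventually.of_forall (fun k => (hstay k).1)
    have hprop : ∀ w ∈ Set.Ioc p z, ∀ k, (f^[n])^[k] w ∈ Set.Ioc p ((f^[n])^[k] z) := by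
      intro w hw k
      induction k with
      | zero => simpa using hw
      | succ k ih =>
        have hzk := hstay k
        have hwk : (f^[n])^[k] w ∈ Set.Ioo p (p+η) := ⟨ih.1, lt_of_le_of_lt ih.2 hzk.2⟩
        constructor
        · rw [Function.iterate_succ_apply']
          exact (hkey _ hwk).2.1
        · rw [Function.iterate_succ_apply', Function.iterate_succ_apply']
          exact hg.monotoneOn (hkey _ hwk).1 (hkey _ hzk).1 ih.2
    have htw : ∀ w ∈ Set.Ioc p z, Tendsto (fun k => (f^[n])^[k] w) atTop (𝓝[>] p) := by
      intro w hw
      rw [tendsto_nhdsWithin_iff]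
      constructor
      · refine tendsto_of_tendsto_of_tendsto_of_le_of_le
          tendsto_const_nhds (tendsto_nhdsWithin_iff.1 htz).1
          (fun k => (hprop w hw k).1.le) (fun k => (hprop w hw k).2)
      · exact Eventually.of_forall (fun k => (hprop w hw k).1)
    set A : Set ℝ := {y | ∃ r < n, L r = y} with hAdef
    have homega : ∀ w ∈ Set.Ioc p z, omegaSet f w = A := fun w hw =>
      omega_eq_of_conv hn1 hLtend (htw w hw)
    have hlat : rightLateralOrbit f p n = A := by
      have hlim : ∀ j, rightIter f j p = L j := fun j => (hLtend j).limUnder_eq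
      unfold rightLateralOrbit
      simp only [hlim, hAdef]
    have hattr : IsAttractingPeriodicLikeOrbit f (rightLateralOrbit f p n) := by
      right
      refine ⟨p, n, hnper, rfl, z - p, by linarith [hzmem.1], fun w hw => ?_⟩
      rw [hlat]
      apply homega
      have hzz : p + (z - p) = z := by ring
      rw [hzz] at hw
      exact ⟨hw.1, hw.2.le⟩
    apply hxB0 _ hattr
    have hωx : omegaSet f x = A := by
      rw [← omegaSet_iterate f x m, ← hzdef, homega z ⟨hzmem.1, le_refl z⟩]
    rw [hωx, hlat]
  · push_neg at hcase
    have hfreq : ∀ N : ℕ, ∃ m' ≥ N, f^[m'] x ∈ Set.Icc (p + η) (p + c) := by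
      intro N
      obtain ⟨m, hmN, hmem⟩ := frequently_orbit_near_right horbacc η hη0 N
      obtain ⟨k₀, hk₀⟩ := hcase m hmem
      have hex : ∃ k, (f^[n])^[k] (f^[m] x) ∉ Set.Ioo p (p+η) := ⟨k₀, hk₀⟩
      set k := Nat.find hex with hkdef
      have hkspec : (f^[n])^[k] (f^[m] x) ∉ Set.Ioo p (p+η) := Nat.find_spec hex
      have hkpos : 0 < k := by
        rcases Nat.eq_zero_or_pos k with h0 | h
        · exfalso; apply hkspec; rw [h0]; simpa using hmem
        · exact h
      have hprev : (f^[n])^[k-1] (f^[m] x) ∈ Set.Ioo p (p+η) := by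
        have := Nat.find_min hex (show k - 1 < k by omega)
        simpa using this
      have hstep : (f^[n])^[k] (f^[m] x) ∈ Set.Ioo p (p+c) := by
        have hkk : k = (k-1) + 1 := by omega
        rw [hkk, Function.iterate_succ_apply']
        exact (hkey _ hprev).2
      have hle : p + η ≤ (f^[n])^[k] (f^[m] x) := by
        by_contra hgt
        push_neg at hgt
        exact hkspec ⟨hstep.1, hgt⟩
      refine ⟨n*k + m, le_trans hmN (Nat.le_add_left m _), ?_⟩
      have : f^[n*k + m] x = (f^[n])^[k] (f^[m] x) := by
        rw [Function.iterate_add_apply, Function.iterate_mul]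
      rw [this]
      exact ⟨hle, hstep.2.le⟩
    have hfreq' : ∃ᶠ m in atTop, f^[m] x ∈ Set.Icc (p+η) (p+c) :=
      frequently_atTop.2 (fun N => hfreq N)
    obtain ⟨y, hyK, hy⟩ := exists_mapClusterPt_of_frequently isCompact_Icc hfreq'
    exact hω y hy ⟨by linarith [hyK.1], by linarith [hyK.2]⟩

/-- For a point `x` outside every basin of an attracting periodic-like orbit and whose
orbit avoids the exceptional set, a periodic-like point `p` is accumulated (from the
appropriate side) by the orbit of `x` iff it is accumulated by `ω_f(x)`. -/
theorem periodic_like_orbit_vs_omega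
    (f : ℝ → ℝ) (C : Finset ℝ)
    (hC : (C : Set ℝ) ⊆ Set.Ioo (0:ℝ) 1)
    (hmaps : Set.MapsTo f (Set.Icc 0 1 \ (C : Set ℝ)) (Set.Icc 0 1))
    (hreg : ContDiffOn ℝ 3 f (Set.Icc 0 1 \ (C : Set ℝ)))
    (hdiffeo : ∀ x ∈ Set.Icc (0:ℝ) 1 \ (C : Set ℝ),
      derivWithin f (Set.Icc 0 1 \ (C : Set ℝ)) x ≠ 0)
    (hSf : ∀ x ∈ Set.Icc (0:ℝ) 1 \ (C : Set ℝ),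
      schwarzianWithin f (Set.Icc 0 1 \ (C : Set ℝ)) x < 0)
    (x : ℝ) (hx : x ∈ Set.Icc (0:ℝ) 1)
    (horb : ∀ n : ℕ, f^[n] x ∉ (C : Set ℝ))
    (hxB0 : ∀ A : Set ℝ, IsAttractingPeriodicLikeOrbit f A → ¬ omegaSet f x ⊆ A)
    (p : ℝ) (hper : IsPeriodicLike f p) :
    ((∃ n, IsLeftPeriodic f p n) →
      (p ∈ closure (forwardOrbit f x ∩ Set.Ico 0 p) ↔
        p ∈ closure (omegaSet f x ∩ Set.Ico 0 p))) ∧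
    ((∃ n, IsRightPeriodic f p n) →
      (p ∈ closure (forwardOrbit f x ∩ Set.Ioc p 1) ↔
        p ∈ closure (omegaSet f x ∩ Set.Ioc p 1))) := by
  have horbIcc := orbit_mem_Icc hmaps hx horb
  have hωIcc := omegaSet_subset_Icc horbIcc
  have horbsub : forwardOrbit f x ⊆ Set.Icc 0 1 := by
    rintro y ⟨m, hm⟩
    rw [← hm]; exact horbIcc m
  constructor
  · rintro ⟨n, hn⟩
    constructor
    · intro h; exact hard_left hmaps hreg hdiffeo hx horb hxB0 hn h
    · intro h
      have h1 : omegaSet f x ∩ Set.Ico 0 p ⊆ closure (forwardOrbit f x ∩ Set.Ico 0 p) := by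
        rw [inter_Ico_eq_inter_Iio hωIcc p, inter_Ico_eq_inter_Iio horbsub p]
        exact omega_inter_subset_closure_orbit isOpen_Iio
      exact closure_minimal h1 isClosed_closure h
  · rintro ⟨n, hn⟩
    constructor
    · intro h; exact hard_right hmaps hreg hdiffeo hx horb hxB0 hn h
    · intro h
      have h1 : omegaSet f x ∩ Set.Ioc p 1 ⊆ closure (forwardOrbit f x ∩ Set.Ioc p 1) := by
        rw [inter_Ioc_eq_inter_Ioi hωIcc p, inter_Ioc_eq_inter_Ioi horbsub p]
        exact omega_inter_subset_closure_orbit isOpen_Ioi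
      exact closure_minimal h1 isClosed_closure h
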